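/- Let A ⊆ {1,…,N} with |A| ≥ γ·N, let γ ∈ (1/2, 1], ℓ ∈ (0, 2·arccos((1−γ)/γ)), and κ > D(Ω)/(γ·sin ℓ − 2(1−γ)·sin(ℓ/2)), and let θ be a Kuramoto solution with D(Θ_A(0)) ≤ ℓ. Then: (1) sup_{t ≥ 0} D(Θ_A(t)) ≤ ℓ and limsup_{t→∞} D(Θ_A(t)) ≤ φ₁ ≤ (3π/(4(2γ−1)))·(D(Ω)/κ), where φ₁ is the unique solution of γ·sin φ − 2(1−γ)·sin(φ/2) = D(Ω)/κ in [0, θ*] with θ* := 2·arccos((1−γ+√((1−γ)²+8γ²))/(4γ)); (2) the full phase diameter stays bounded: sup_{t ≥ 0} D(Θ(t)) < ∞. -/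

import Mathlib

/-!
The diameter of `A` is the largest of the finitely many differences `θ i - θ j` with `i, j ∈ A`,
so it stays below a barrier `B` as soon as every difference that is maximal and touches `B` grows
more slowly than `B` (a fencing argument). At such a moment all of `A` lies on the arc of length
`λ = B t` from `θ j` to `θ i`: each oscillator of `A` pulls the two ends together at a rate of at
least `sin λ`, each of the at most `(1 - γ) N` others pulls them apart at a rate of at most
`2 sin (λ / 2)`, so `θ i - θ j` decreases at least at rate
`κ (γ sin λ - 2 (1 - γ) sin (λ / 2)) - D(Ω)`. The constant barrier `ℓ` gives stability; since
this rate function is concave on `[0, ℓ]`, a barrier decaying exponentially from `ℓ` to its root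
`φ₁` gives the bound on the limsup. The same estimate, with `θ i` shifted by whole turns, keeps
every oscillator within bounded distance above `A`, and by the symmetry `θ ↦ -θ` also below it.
-/

/-- A Kuramoto solution on `[0,∞)` (modeled as a function on ℝ whose ODE holds on `Set.Ici 0`). -/
def IsKuramotoOn {N : ℕ} (κ : ℝ) (ν : Fin N → ℝ) (θ : ℝ → Fin N → ℝ) : Prop :=
  ∀ (i : Fin N), ∀ t ∈ Set.Ici (0 : ℝ), HasDerivWithinAt (fun s => θ s i)
    (ν i + κ / N * ∑ j, Real.sin (θ t j - θ t i)) (Set.Ici 0) t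

noncomputable def diam {N : ℕ} (A : Finset (Fin N)) (x : Fin N → ℝ) : ℝ :=
  sSup {d : ℝ | ∃ i ∈ A, ∃ j ∈ A, d = |x i - x j|}

open Set Filter Finset Real Topology

section Diam

variable {N : ℕ} {A : Finset (Fin N)} {x : Fin N → ℝ}

lemma abs_sub_le_diam {i j : Fin N} (hi : i ∈ A) (hj : j ∈ A) : |x i - x j| ≤ diam A x := by
  refine le_csSup ((Set.finite_range fun p : Fin N × Fin N => |x p.1 - x p.2|).bddAbove.mono ?_)
    ⟨i, hi, j, hj, rfl⟩
  rintro _ ⟨i, -, j, -, rfl⟩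
  exact ⟨(i, j), rfl⟩

lemma sub_le_diam {i j : Fin N} (hi : i ∈ A) (hj : j ∈ A) : x i - x j ≤ diam A x :=
  (le_abs_self _).trans (abs_sub_le_diam hi hj)

lemma diam_nonneg : 0 ≤ diam A x :=
  Real.sSup_nonneg fun _ ⟨_, _, _, _, hd⟩ => hd ▸ abs_nonneg _

lemma diam_le {c : ℝ} (hc : 0 ≤ c) (h : ∀ i ∈ A, ∀ j ∈ A, x i - x j ≤ c) : diam A x ≤ c :=
  Real.sSup_le (fun _ ⟨i, hi, j, hj, hd⟩ => hd ▸ abs_sub_le_iff.2 ⟨h i hi j hj, h j hj i hi⟩) hc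

lemma diam_eq_sup' (hA : A.Nonempty) :
    diam A x = (A ×ˢ A).sup' (hA.product hA) fun p => x p.1 - x p.2 := by
  obtain ⟨k, hk⟩ := hA
  refine le_antisymm (diam_le ?_ fun i hi j hj => ?_) (sup'_le _ _ fun p hp => ?_)
  · exact (sub_self (x k)).symm.trans_le
      (le_sup' (fun p : Fin N × Fin N => x p.1 - x p.2) (b := (k, k)) (mem_product.2 ⟨hk, hk⟩))
  · exact le_sup' (fun p : Fin N × Fin N => x p.1 - x p.2) (b := (i, j)) (mem_product.2 ⟨hi, hj⟩)
  · exact sub_le_diam (mem_product.1 hp).1 (mem_product.1 hp).2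

lemma diam_neg : diam A (-x) = diam A x := by
  simp only [diam, Pi.neg_apply, neg_sub_neg]
  congr 1
  ext d
  constructor <;> rintro ⟨i, hi, j, hj, rfl⟩ <;> exact ⟨j, hj, i, hi, rfl⟩

end Diam

section Comparison

variable {ι : Type*} {s : Finset ι} (hs : s.Nonempty) {g : ι → ℝ → ℝ}

lemma eventually_slope_sup'_lt {g' : ι → ℝ} {x r : ℝ}
    (hg : ∀ i ∈ s, HasDerivWithinAt (g i) (g' i) (Ici x) x)
    (hr : ∀ i ∈ s, (∀ j ∈ s, g j x ≤ g i x) → g' i < r) :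
    ∀ᶠ z in 𝓝[>] x, slope (fun y => s.sup' hs (g · y)) x z < r := by
  have hbelow : ∀ i ∈ s, ∀ᶠ z in 𝓝[>] x, g i z < s.sup' hs (g · x) + r * (z - x) := by
    intro i hi
    rcases (le_sup' (g · x) hi).eq_or_lt with hmax | hlt
    · have hslope := ((hg i hi).mono Ioi_subset_Ici_self).limsup_slope_le' (lt_irrefl x)
        (hr i hi fun j hj => hmax ▸ le_sup' (g · x) hj)
      filter_upwards [hslope, self_mem_nhdsWithin] with z hz hxz
      rw [slope_def_field, div_lt_iff₀ (sub_pos.2 hxz)] at hz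
      linarith
    · have hcont : Tendsto (fun z => g i z - r * (z - x)) (𝓝[>] x) (𝓝 (g i x - r * (x - x))) :=
        (((hg i hi).continuousWithinAt.mono Ioi_subset_Ici_self).sub
          (by fun_prop : Continuous fun z => r * (z - x)).continuousWithinAt).tendsto
      filter_upwards [hcont.eventually_lt_const (by simpa using hlt)] with z hz
      linarith
  filter_upwards [(eventually_all_finset s).2 hbelow, self_mem_nhdsWithin] with z hz hxz
  rw [slope_def_field, div_lt_iff₀ (sub_pos.2 hxz), sub_lt_iff_lt_add', sup'_lt_iff]
  exact hz

theorem sup'_le_of_deriv_right_lt_deriv_boundary {g' : ι → ℝ → ℝ} {B B' : ℝ → ℝ} {a b : ℝ}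
    (hg : ∀ i ∈ s, ∀ x ∈ Ico a b, HasDerivWithinAt (g i) (g' i x) (Ici x) x)
    (hgc : ∀ i ∈ s, ContinuousOn (g i) (Icc a b)) (ha : s.sup' hs (g · a) ≤ B a)
    (hB : ContinuousOn B (Icc a b)) (hB' : ∀ x ∈ Ico a b, HasDerivWithinAt B (B' x) (Ici x) x)
    (bound : ∀ x ∈ Ico a b, ∀ i ∈ s, (∀ j ∈ s, g j x ≤ g i x) → g i x = B x → g' i x < B' x) :
    ∀ ⦃x⦄, x ∈ Icc a b → s.sup' hs (g · x) ≤ B x := by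
  classical
  let active x := s.filter fun i => ∀ j ∈ s, g j x ≤ g i x
  have hactive x : (active x).Nonempty := by
    obtain ⟨i, hi, hmax⟩ := exists_mem_eq_sup' hs (g · x)
    exact ⟨i, mem_filter.2 ⟨hi, fun j hj => hmax ▸ le_sup' (g · x) hj⟩⟩
  have hmax_eq {x i} (hi : i ∈ active x) : g i x = s.sup' hs (g · x) :=
    le_antisymm (le_sup' (g · x) (mem_filter.1 hi).1) (sup'_le _ _ (mem_filter.1 hi).2)
  refine image_le_of_liminf_slope_right_lt_deriv_boundary' (f' := fun x => (active x).sup'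
    (hactive x) (g' · x)) (ContinuousOn.finset_sup'_apply hs hgc) (fun x hx r hr => ?_) ha hB hB'
    fun x hx hfx => (sup'_lt_iff _).2 fun i hi =>
      bound x hx i (mem_filter.1 hi).1 (mem_filter.1 hi).2 ((hmax_eq hi).trans hfx)
  refine (eventually_slope_sup'_lt hs (fun i hi => hg i hi x hx) fun i hi hmax => ?_).frequently
  exact (le_sup' (g' · x) (mem_filter.2 ⟨hi, hmax⟩)).trans_lt hr

end Comparison

lemma sin_sub_sub_sin_le_neg_sin {w l : ℝ} (hw : w ∈ Icc 0 l) (hl : l ≤ π) :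
    sin (w - l) - sin w ≤ -sin l := by
  have hsin_lw : 0 ≤ sin (l - w) :=
    sin_nonneg_of_nonneg_of_le_pi (by linarith [hw.2]) (by linarith [hw.1])
  have hsin_w : 0 ≤ sin w := sin_nonneg_of_nonneg_of_le_pi hw.1 (hw.2.trans hl)
  have hl_eq : sin l = sin (l - w) * cos w + cos (l - w) * sin w := by
    rw [← sin_add, sub_add_cancel]
  rw [← neg_sub l w, sin_neg, hl_eq]
  nlinarith [mul_le_of_le_one_right hsin_lw (cos_le_one w),
    mul_le_of_le_one_right hsin_w (cos_le_one (l - w))]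

lemma sin_sub_sub_sin_le (w : ℝ) {l : ℝ} (hl : l ∈ Icc 0 (2 * π)) :
    sin (w - l) - sin w ≤ 2 * sin (l / 2) := by
  have hsin : 0 ≤ sin (l / 2) :=
    sin_nonneg_of_nonneg_of_le_pi (by linarith [hl.1]) (by linarith [hl.2])
  rw [sin_sub_sin, show (w - l - w) / 2 = -(l / 2) by ring, sin_neg]
  nlinarith [neg_one_le_cos ((w - l + w) / 2)]

/-- `κ * contractionRate γ λ - D(Ω)` bounds from below the rate at which the diameter of a
`γ`-majority ensemble shrinks while it equals `λ`. -/
noncomputable def contractionRate (γ x : ℝ) : ℝ := γ * sin x - 2 * (1 - γ) * sin (x / 2)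

lemma sin_eq_two_mul_sin_half_mul_cos_half (x : ℝ) : sin x = 2 * sin (x / 2) * cos (x / 2) := by
  rw [← sin_two_mul, mul_div_cancel₀ x two_ne_zero]

lemma contractionRate_eq_mul (γ x : ℝ) :
    contractionRate γ x = 2 * sin (x / 2) * (γ * cos (x / 2) - (1 - γ)) := by
  rw [contractionRate, sin_eq_two_mul_sin_half_mul_cos_half]
  ring

lemma contractionRate_pos {γ x : ℝ} (hx : x ∈ Ioo 0 (2 * π)) (hcos : 1 - γ < γ * cos (x / 2)) :
    0 < contractionRate γ x := by
  rw [contractionRate_eq_mul]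
  have := sin_pos_of_pos_of_lt_pi (half_pos hx.1) (by linarith [hx.2])
  have : 0 < γ * cos (x / 2) - (1 - γ) := by linarith
  positivity

lemma hasDerivAt_contractionRate (γ x : ℝ) :
    HasDerivAt (contractionRate γ) (γ * cos x - (1 - γ) * cos (x / 2)) x :=
  (((hasDerivAt_sin x).const_mul γ).sub
    (((hasDerivAt_id' x).div_const 2).sin.const_mul (2 * (1 - γ)))).congr_deriv (by ring)

lemma concaveOn_contractionRate {γ l : ℝ} (hγ : 0 ≤ γ) (hl : l ≤ π)
    (hcos : 1 - γ ≤ 4 * γ * cos (l / 2)) : ConcaveOn ℝ (Icc 0 l) (contractionRate γ) := by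
  refine concaveOn_of_hasDerivWithinAt2_nonpos (convex_Icc 0 l)
    (fun x _ => (hasDerivAt_contractionRate γ x).continuousAt.continuousWithinAt)
    (fun x _ => (hasDerivAt_contractionRate γ x).hasDerivWithinAt)
    (f'' := fun x => -γ * sin x + (1 - γ) / 2 * sin (x / 2))
    (fun x _ => HasDerivAt.hasDerivWithinAt ?_) fun x hx => ?_
  · exact (((hasDerivAt_cos x).const_mul γ).sub
      (((hasDerivAt_id' x).div_const 2).cos.const_mul (1 - γ))).congr_deriv (by ring)
  · rw [interior_Icc] at hx
    have hsin : 0 ≤ sin (x / 2) :=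
      sin_nonneg_of_nonneg_of_le_pi (by linarith [hx.1]) (by linarith [hx.2, pi_pos])
    have hcos_le : cos (l / 2) ≤ cos (x / 2) :=
      cos_le_cos_of_nonneg_of_le_pi (by linarith [hx.1]) (by linarith [pi_pos]) (by linarith [hx.2])
    rw [sin_eq_two_mul_sin_half_mul_cos_half x]
    nlinarith [mul_le_mul_of_nonneg_left hcos_le hγ]

/-- With `c = cos (x / 2)`, the derivative of `contractionRate γ` at `x` is
`2 γ c² - (1 - γ) c - γ`; its positive root `criticalCos γ` gives the maximiser
`θ* = 2 * arccos (criticalCos γ)`. -/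
noncomputable def criticalCos (γ : ℝ) : ℝ := (1 - γ + √((1 - γ) ^ 2 + 8 * γ ^ 2)) / (4 * γ)

lemma criticalCos_root {γ : ℝ} (hγ : 0 < γ) :
    2 * γ * criticalCos γ ^ 2 - (1 - γ) * criticalCos γ - γ = 0 := by
  have hsq := Real.sq_sqrt (by positivity : 0 ≤ (1 - γ) ^ 2 + 8 * γ ^ 2)
  rw [criticalCos]
  set r := √((1 - γ) ^ 2 + 8 * γ ^ 2)
  field_simp
  linear_combination 2 * hsq

lemma criticalCos_pos {γ : ℝ} (hγ : 0 < γ) (hγ1 : γ ≤ 1) : 0 < criticalCos γ := by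
  have : 0 < √((1 - γ) ^ 2 + 8 * γ ^ 2) := Real.sqrt_pos.2 (by positivity)
  unfold criticalCos
  have : 0 < 1 - γ + √((1 - γ) ^ 2 + 8 * γ ^ 2) := by linarith
  positivity

lemma criticalCos_le_one {γ : ℝ} (hγ : 1 / 2 ≤ γ) : criticalCos γ ≤ 1 := by
  rw [criticalCos, div_le_one (by linarith), ← le_sub_iff_add_le']
  exact Real.sqrt_le_iff.2 ⟨by linarith, by nlinarith⟩

lemma mul_le_contractionRate {γ x : ℝ} (hγ : 1 / 2 ≤ γ) (hγ1 : γ ≤ 1)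
    (hx : x ∈ Icc 0 (2 * arccos (criticalCos γ))) : (2 * γ - 1) / 2 * x ≤ contractionRate γ x := by
  obtain ⟨v, rfl⟩ : ∃ v, x = 2 * v := ⟨x / 2, by ring⟩
  set c := criticalCos γ
  have hc0 : 0 < c := criticalCos_pos (by linarith) hγ1
  have hc1 : c ≤ 1 := criticalCos_le_one hγ
  have hroot : 2 * γ * c ^ 2 - (1 - γ) * c - γ = 0 := criticalCos_root (by linarith)
  have hv0 : 0 ≤ v := by linarith [hx.1]
  have hv : v ≤ arccos c := by linarith [hx.2]
  have hcos : c ≤ cos v := by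
    simpa [cos_arccos (by linarith) hc1] using
      cos_le_cos_of_nonneg_of_le_pi hv0 (arccos_le_pi c) hv
  have hvπ : v < π / 2 := hv.trans_lt (arccos_lt_pi_div_two.2 hc0)
  have hsin : v * cos v ≤ sin v := by
    have := le_tan hv0 hvπ
    rwa [tan_eq_sin_div_cos, le_div_iff₀ (cos_pos_of_mem_Ioo ⟨by linarith, hvπ⟩)] at this
  have hfactor : 0 ≤ γ * c - (1 - γ) := by nlinarith
  have hgrow : c * (γ * c - (1 - γ)) ≤ cos v * (γ * cos v - (1 - γ)) := by
    nlinarith [mul_nonneg (sub_nonneg.2 hcos) (by nlinarith : 0 ≤ γ * (cos v + c) - (1 - γ))]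
  have hγc : 0 ≤ γ * cos v - (1 - γ) := by
    nlinarith [mul_le_mul_of_nonneg_left hcos (by linarith : 0 ≤ γ)]
  rw [contractionRate_eq_mul, mul_div_cancel_left₀ v two_ne_zero]
  calc (2 * γ - 1) / 2 * (2 * v) ≤ v * (γ - (1 - γ) * c) := by
        nlinarith [mul_nonneg hv0 (mul_nonneg (by linarith : 0 ≤ 1 - γ) (sub_nonneg.2 hc1))]
    _ = 2 * v * (c * (γ * c - (1 - γ))) := by linear_combination -v * hroot
    _ ≤ 2 * (v * cos v) * (γ * cos v - (1 - γ)) := by nlinarith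
    _ ≤ 2 * sin v * (γ * cos v - (1 - γ)) := by gcongr

lemma le_mul_contractionRate {γ x : ℝ} (hγ : 1 / 2 < γ) (hγ1 : γ ≤ 1)
    (hx : x ∈ Icc 0 (2 * arccos (criticalCos γ))) :
    x ≤ 3 * π / (4 * (2 * γ - 1)) * contractionRate γ x := by
  have hlin := mul_le_contractionRate hγ.le hγ1 hx
  have h2γ : 0 < 2 * γ - 1 := by linarith
  rw [div_mul_eq_mul_div, le_div_iff₀ (by positivity)]
  nlinarith [mul_le_mul_of_nonneg_left hlin (by positivity : (0 : ℝ) ≤ 3 * π),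
    mul_nonneg h2γ.le hx.1, mul_nonneg (mul_nonneg h2γ.le hx.1) (sub_nonneg.2 pi_gt_three.le)]

lemma one_sub_lt_mul_cos_half {γ l : ℝ} (hγ : 1 / 2 < γ)
    (hl : l ∈ Ioo 0 (2 * arccos ((1 - γ) / γ))) : 1 - γ < γ * cos (l / 2) := by
  have hγ0 : 0 < γ := by linarith
  have h := cos_lt_cos_of_nonneg_of_le_pi (by linarith [hl.1]) (arccos_le_pi _)
    (by linarith [hl.2] : l / 2 < arccos ((1 - γ) / γ))
  rwa [cos_arccos ((le_div_iff₀ hγ0).2 (by linarith)) ((div_le_one hγ0).2 (by linarith)),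
    div_lt_iff₀' hγ0] at h

lemma lt_pi_of_lt_two_mul_arccos {γ l : ℝ} (hγ : 0 < γ) (hγ1 : γ ≤ 1)
    (hl : l < 2 * arccos ((1 - γ) / γ)) : l < π := by
  linarith [arccos_le_pi_div_two.2 (div_nonneg (sub_nonneg.2 hγ1) hγ.le)]

lemma sum_sin_sub_sub_sin_le {ι : Type*} [Fintype ι] {A : Finset ι} {γ l : ℝ}
    (hcard : γ * Fintype.card ι ≤ #A) (hl : l ∈ Icc 0 π) {w : ι → ℝ}
    (hw : ∀ k ∈ A, w k ∈ Icc 0 l) :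
    ∑ k, (sin (w k - l) - sin (w k)) ≤ -(Fintype.card ι * contractionRate γ l) := by
  classical
  have hin : ∑ k ∈ A, (sin (w k - l) - sin (w k)) ≤ #A • -sin l :=
    sum_le_card_nsmul _ _ _ fun k hk => sin_sub_sub_sin_le_neg_sin (hw k hk) hl.2
  have hout : ∑ k ∈ Aᶜ, (sin (w k - l) - sin (w k)) ≤ #Aᶜ • (2 * sin (l / 2)) :=
    sum_le_card_nsmul _ _ _ fun k _ => sin_sub_sub_sin_le _ ⟨hl.1, by linarith [hl.2, pi_pos]⟩
  have hsin : 0 ≤ sin l + 2 * sin (l / 2) := by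
    have := sin_nonneg_of_nonneg_of_le_pi hl.1 hl.2
    have := sin_nonneg_of_nonneg_of_le_pi (by linarith [hl.1] : 0 ≤ l / 2)
      (by linarith [hl.2, pi_pos])
    linarith
  rw [← sum_add_sum_compl A, contractionRate]
  rw [nsmul_eq_mul] at hin
  rw [nsmul_eq_mul, card_compl, Nat.cast_sub (card_le_univ A)] at hout
  nlinarith [mul_le_mul_of_nonneg_right hcard hsin]

noncomputable def kuramotoField {N : ℕ} (κ : ℝ) (ν : Fin N → ℝ) (x : Fin N → ℝ) (i : Fin N) :
    ℝ :=
  ν i + κ / N * ∑ j, sin (x j - x i)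

section Kuramoto

variable {N : ℕ} {κ : ℝ} {ν : Fin N → ℝ}

lemma kuramotoField_sub_kuramotoField_le {A : Finset (Fin N)} {γ l : ℝ} (hκ : 0 ≤ κ)
    (hcard : γ * N ≤ #A) (hl : l ∈ Icc 0 π) {x : Fin N → ℝ} {i j : Fin N} (n : ℤ)
    (hij : x i = x j + l + n * (2 * π)) (hA : ∀ k ∈ A, x k - x j ∈ Icc 0 l) :
    kuramotoField κ ν x i - kuramotoField κ ν x j ≤ diam univ ν - κ * contractionRate γ l := by
  have hN : (0 : ℝ) < N := Nat.cast_pos.2 i.pos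
  have hsum := sum_sin_sub_sub_sin_le (by simpa using hcard) hl hA
  rw [Fintype.card_fin] at hsum
  have hshift k : sin (x k - x i) = sin (x k - x j - l) := by
    rw [hij, ← sin_sub_int_mul_two_pi (x k - x j - l) n]
    ring_nf
  have hfield : kuramotoField κ ν x i - kuramotoField κ ν x j
      = (ν i - ν j) + κ / N * ∑ k, (sin (x k - x j - l) - sin (x k - x j)) := by
    simp only [kuramotoField, hshift, sum_sub_distrib]
    ring
  have hcoupling : κ / N * ∑ k, (sin (x k - x j - l) - sin (x k - x j))
      ≤ -(κ * contractionRate γ l) := by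
    calc _ ≤ κ / N * -(N * contractionRate γ l) := by gcongr
      _ = -(κ * contractionRate γ l) := by field_simp
  rw [hfield]
  linarith [sub_le_diam (x := ν) (mem_univ i) (mem_univ j)]

namespace IsKuramotoOn

variable {θ : ℝ → Fin N → ℝ} (hθ : IsKuramotoOn κ ν θ)
include hθ

lemma hasDerivWithinAt_sub (i j : Fin N) {t : ℝ} (ht : 0 ≤ t) :
    HasDerivWithinAt (fun s => θ s i - θ s j)
      (kuramotoField κ ν (θ t) i - kuramotoField κ ν (θ t) j) (Ici t) t :=
  ((hθ i t ht).sub (hθ j t ht)).mono (Ici_subset_Ici.2 ht)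

lemma continuousOn_sub (i j : Fin N) : ContinuousOn (fun s => θ s i - θ s j) (Ici 0) :=
  fun t ht => ((hθ i t ht).sub (hθ j t ht)).continuousWithinAt

lemma neg : IsKuramotoOn κ (-ν) (-θ) := by
  intro i t ht
  refine (hθ i t ht).neg.congr_deriv ?_
  simp only [Pi.neg_apply, neg_sub_neg, ← neg_sub (θ t _) (θ t i), sin_neg, sum_neg_distrib]
  ring

lemma sup'_sub_le_of_barrier {s : Finset (Fin N × Fin N)} (hs : s.Nonempty) {B B' : ℝ → ℝ}
    (hB : ∀ t, HasDerivAt B (B' t) t) (h0 : s.sup' hs (fun p => θ 0 p.1 - θ 0 p.2) ≤ B 0)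
    (bound : ∀ t ≥ 0, ∀ p ∈ s, (∀ q ∈ s, θ t q.1 - θ t q.2 ≤ θ t p.1 - θ t p.2) →
      θ t p.1 - θ t p.2 = B t →
      kuramotoField κ ν (θ t) p.1 - kuramotoField κ ν (θ t) p.2 < B' t)
    {t : ℝ} (ht : 0 ≤ t) : s.sup' hs (fun p => θ t p.1 - θ t p.2) ≤ B t :=
  sup'_le_of_deriv_right_lt_deriv_boundary hs (g := fun p s => θ s p.1 - θ s p.2)
    (fun _ _ _ hx => hθ.hasDerivWithinAt_sub _ _ hx.1)
    (fun _ _ => (hθ.continuousOn_sub _ _).mono Icc_subset_Ici_self) h0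
    (fun x _ => (hB x).continuousAt.continuousWithinAt) (fun x _ => (hB x).hasDerivWithinAt)
    (fun x hx p hp => bound x hx.1 p hp) ⟨ht, le_rfl⟩

variable {A : Finset (Fin N)} {γ : ℝ}

theorem diam_le_of_barrier (hA : A.Nonempty) (hcard : γ * N ≤ #A) (hκ : 0 ≤ κ)
    {B B' : ℝ → ℝ} (hB : ∀ t, HasDerivAt B (B' t) t) (hBπ : ∀ t ≥ 0, B t ∈ Icc 0 π)
    (h0 : diam A (θ 0) ≤ B 0) (hrate : ∀ t ≥ 0, diam univ ν - κ * contractionRate γ (B t) < B' t)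
    {t : ℝ} (ht : 0 ≤ t) : diam A (θ t) ≤ B t := by
  rw [diam_eq_sup' hA] at h0 ⊢
  refine hθ.sup'_sub_le_of_barrier _ hB h0 (fun t ht p hp hmax htouch => ?_) ht
  obtain ⟨hi, hj⟩ := mem_product.1 hp
  have hA_arc : ∀ k ∈ A, θ t k - θ t p.2 ∈ Icc 0 (B t) := fun k hk =>
    ⟨by linarith [hmax (p.1, k) (mem_product.2 ⟨hi, hk⟩)],
      by linarith [hmax (k, p.2) (mem_product.2 ⟨hk, hj⟩)]⟩
  refine (kuramotoField_sub_kuramotoField_le hκ hcard (hBπ t ht) 0 ?_ hA_arc).trans_lt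
    (hrate t ht)
  simp only [Int.cast_zero, zero_mul, add_zero]
  linarith

theorem exists_forall_sub_le (hcard : γ * N ≤ #A) (hκ : 0 ≤ κ) {l : ℝ} (hl : l ∈ Icc 0 π)
    (hstab : ∀ t ≥ 0, diam A (θ t) ≤ l) (hrate : diam univ ν < κ * contractionRate γ l)
    (i : Fin N) : ∃ C, ∀ t ≥ 0, ∀ k ∈ A, θ t i - θ t k ≤ C := by
  rcases A.eq_empty_or_nonempty with rfl | hA
  · exact ⟨0, by simp⟩
  have hs : ({i} ×ˢ A).Nonempty := (Finset.singleton_nonempty i).product hA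
  -- raising the barrier by whole turns leaves the coupling unchanged
  obtain ⟨n, hn⟩ := Archimedean.arch (({i} ×ˢ A).sup' hs fun p => θ 0 p.1 - θ 0 p.2)
    two_pi_pos
  refine ⟨l + n * (2 * π), fun t ht k hk => ?_⟩
  have hbarrier := hθ.sup'_sub_le_of_barrier hs (B := fun _ => l + n * (2 * π)) (B' := 0)
    (fun _ => hasDerivAt_const _ _) (by rw [nsmul_eq_mul] at hn; linarith [hl.1])
    (fun t ht p hp hmax htouch => ?_) ht
  · exact (le_sup' (fun p : Fin N × Fin N => θ t p.1 - θ t p.2) (b := (i, k))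
      (mem_product.2 ⟨mem_singleton_self i, hk⟩)).trans hbarrier
  obtain ⟨hi, hj⟩ := mem_product.1 hp
  rw [mem_singleton.1 hi] at hmax htouch ⊢
  have hA_arc : ∀ k ∈ A, θ t k - θ t p.2 ∈ Icc 0 l := fun k hk =>
    ⟨by linarith [hmax (i, k) (mem_product.2 ⟨mem_singleton_self i, hk⟩)],
      (sub_le_diam hk hj).trans (hstab t ht)⟩
  refine (kuramotoField_sub_kuramotoField_le hκ hcard hl n ?_ hA_arc).trans_lt
    (by simpa using hrate)
  push_cast at htouch ⊢
  linarith

theorem exists_forall_diam_le (hA : A.Nonempty) (hcard : γ * N ≤ #A) (hκ : 0 ≤ κ) {l : ℝ}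
    (hl : l ∈ Icc 0 π) (hstab : ∀ t ≥ 0, diam A (θ t) ≤ l)
    (hrate : diam univ ν < κ * contractionRate γ l) :
    ∃ M, ∀ t ≥ 0, diam univ (θ t) ≤ M := by
  choose C hC using hθ.exists_forall_sub_le hcard hκ hl hstab hrate
  choose C' hC' using hθ.neg.exists_forall_sub_le hcard hκ hl
    (fun t ht => (diam_neg (x := θ t)).trans_le (hstab t ht)) (by rwa [diam_neg])
  obtain ⟨k, hk⟩ := hA
  refine ⟨∑ i, |C i| + ∑ i, |C' i|, fun t ht => diam_le (by positivity) fun i _ j _ => ?_⟩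
  have hi := hC i t ht k hk
  have hj := hC' j t ht k hk
  simp only [Pi.neg_apply, neg_sub_neg] at hj
  have := single_le_sum (fun i _ => abs_nonneg (C i)) (mem_univ i)
  have := single_le_sum (fun i _ => abs_nonneg (C' i)) (mem_univ j)
  linarith [le_abs_self (C i), le_abs_self (C' j)]

theorem diam_le_exp (hA : A.Nonempty) (hcard : γ * N ≤ #A) (hκ : 0 < κ) {l φ : ℝ} (hlπ : l ≤ π)
    (hconc : ConcaveOn ℝ (Icc 0 l) (contractionRate γ)) (hφ : φ ∈ Ico 0 l)
    (hφν : diam univ ν ≤ κ * contractionRate γ φ)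
    (hφl : contractionRate γ φ < contractionRate γ l) (h0 : diam A (θ 0) ≤ l) :
    ∃ c > 0, ∀ t ≥ 0, diam A (θ t) ≤ φ + (l - φ) * exp (-c * t) := by
  set s := (contractionRate γ l - contractionRate γ φ) / (l - φ)
  have hs : 0 < s := div_pos (sub_pos.2 hφl) (sub_pos.2 hφ.2)
  set c := κ * s / 2
  have hc : 0 < c := by positivity
  have hB t : HasDerivAt (fun t => φ + (l - φ) * exp (-c * t))
      (-(c * ((l - φ) * exp (-c * t)))) t :=
    ((((hasDerivAt_id' t).const_mul (-c)).exp.const_mul (l - φ)).const_add φ).congr_deriv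
      (by ring)
  have hBmem t (ht : 0 ≤ t) : φ + (l - φ) * exp (-c * t) ∈ Set.Ioc φ l := by
    have : exp (-c * t) ≤ 1 := exp_le_one_iff.2 (by nlinarith)
    exact ⟨by nlinarith [exp_pos (-c * t), hφ.2], by nlinarith [hφ.2]⟩
  refine ⟨c, hc, fun t ht => hθ.diam_le_of_barrier hA hcard hκ.le hB
    (fun t ht => ⟨hφ.1.trans (hBmem t ht).1.le, (hBmem t ht).2.trans hlπ⟩)
    (by simpa using h0) (fun t ht => ?_) ht⟩
  have hb := hBmem t ht
  set b := φ + (l - φ) * exp (-c * t) with hb_def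
  rw [show (l - φ) * exp (-c * t) = b - φ by rw [hb_def]; ring]
  -- concavity: the secant from `φ` is steeper towards `b` than towards `l`
  have hsecant := hconc.neg.secant_mono (a := φ) ⟨hφ.1, hφ.2.le⟩ ⟨hφ.1.trans hb.1.le, hb.2⟩
    ⟨hφ.1.trans hφ.2.le, le_rfl⟩ hb.1.ne' hφ.2.ne' hb.2
  simp only [Pi.neg_apply, neg_sub_neg, ← neg_sub (contractionRate γ _) (contractionRate γ φ),
    neg_div, neg_le_neg_iff] at hsecant
  rw [le_div_iff₀ (sub_pos.2 hb.1)] at hsecant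
  have : κ * (s * (b - φ)) ≤ κ * (contractionRate γ b - contractionRate γ φ) := by gcongr
  have hκs : κ * (s * (b - φ)) = 2 * (c * (b - φ)) := by ring
  linarith [mul_pos hc (sub_pos.2 hb.1)]

theorem limsup_diam_le (hA : A.Nonempty) (hcard : γ * N ≤ #A) (hκ : 0 < κ) {l φ : ℝ}
    (hlπ : l ≤ π) (hconc : ConcaveOn ℝ (Icc 0 l) (contractionRate γ)) (hφ : 0 ≤ φ)
    (hφν : diam univ ν ≤ κ * contractionRate γ φ)
    (hφl : contractionRate γ φ < contractionRate γ l) (hstab : ∀ t ≥ 0, diam A (θ t) ≤ l) :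
    limsup (fun t => diam A (θ t)) atTop ≤ φ := by
  have hcobdd : IsCoboundedUnder (· ≤ ·) atTop fun t => diam A (θ t) :=
    isCoboundedUnder_le_of_le atTop fun _ => diam_nonneg
  rcases lt_or_ge φ l with hφl' | hlφ
  · obtain ⟨c, hc, hdecay⟩ :=
      hθ.diam_le_exp hA hcard hκ hlπ hconc ⟨hφ, hφl'⟩ hφν hφl (hstab 0 le_rfl)
    have hlim : Tendsto (fun t => φ + (l - φ) * exp (-c * t)) atTop (𝓝 φ) := by
      simpa using ((tendsto_exp_atBot.comp (tendsto_id.const_mul_atTop_of_neg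
        (neg_neg_of_pos hc))).const_mul (l - φ)).const_add φ
    calc limsup (fun t => diam A (θ t)) atTop
        ≤ limsup (fun t => φ + (l - φ) * exp (-c * t)) atTop :=
          limsup_le_limsup ((eventually_ge_atTop 0).mono hdecay) hcobdd hlim.isBoundedUnder_le
      _ = φ := hlim.limsup_eq
  · exact limsup_le_of_le hcobdd ((eventually_ge_atTop 0).mono fun t ht => (hstab t ht).trans hlφ)

end IsKuramotoOn

end Kuramoto

/-- Corollary 3.1 (1)-(2): with `B = 𝒩`, the majority ensemble `A` is stable,
`limsup D(Θ_A(t)) ≤ φ₁ ≤ (3π/(4(2γ−1)))·D(Ω)/κ`, and the full phase diameter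
stays bounded (hence asymptotic phase-locking). -/
theorem majority_ensemble_complete_phase_locking (N : ℕ) (hN : 1 ≤ N) (κ γ ℓ : ℝ)
    (hγ₁ : 1 / 2 < γ) (hγ₂ : γ ≤ 1)
    (hℓ : ℓ ∈ Set.Ioo 0 (2 * Real.arccos ((1 - γ) / γ)))
    (ν : Fin N → ℝ) (A : Finset (Fin N))
    (hcard : γ * N ≤ (A.card : ℝ))
    (hκ : diam Finset.univ ν / (γ * Real.sin ℓ - 2 * (1 - γ) * Real.sin (ℓ / 2)) < κ)
    (θ : ℝ → Fin N → ℝ) (hθ : IsKuramotoOn κ ν θ)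
    (h0 : diam A (θ 0) ≤ ℓ)
    (θs φ₁ : ℝ)
    (hθs : θs = 2 * Real.arccos ((1 - γ + Real.sqrt ((1 - γ) ^ 2 + 8 * γ ^ 2)) / (4 * γ)))
    (hφ₁mem : φ₁ ∈ Set.Icc 0 θs)
    (hφ₁root : γ * Real.sin φ₁ - 2 * (1 - γ) * Real.sin (φ₁ / 2) = diam Finset.univ ν / κ) :
    ((∀ t ≥ (0 : ℝ), diam A (θ t) ≤ ℓ) ∧
      Filter.limsup (fun t => diam A (θ t)) Filter.atTop ≤ φ₁ ∧
      φ₁ ≤ 3 * Real.pi / (4 * (2 * γ - 1)) * (diam Finset.univ ν / κ)) ∧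
    (∃ M : ℝ, ∀ t ≥ (0 : ℝ), diam Finset.univ (θ t) ≤ M) := by
  have hγ : 0 < γ := by linarith
  have hℓπ : ℓ < π := lt_pi_of_lt_two_mul_arccos hγ hγ₂ hℓ.2
  have hcos : 1 - γ < γ * cos (ℓ / 2) := one_sub_lt_mul_cos_half hγ₁ hℓ
  have hFℓ : 0 < contractionRate γ ℓ := contractionRate_pos ⟨hℓ.1, by linarith [pi_pos]⟩ hcos
  have hrate : diam univ ν < κ * contractionRate γ ℓ := by
    change diam univ ν / contractionRate γ ℓ < κ at hκ
    rw [div_lt_iff₀ hFℓ] at hκ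
    linarith
  have hκ0 : 0 < κ := pos_of_mul_pos_left (diam_nonneg.trans_lt hrate) hFℓ.le
  have hφ₁ν : diam univ ν = κ * contractionRate γ φ₁ := by
    rw [contractionRate, hφ₁root, mul_div_cancel₀ _ hκ0.ne']
  have hA : A.Nonempty :=
    card_pos.1 <| Nat.cast_pos.1 <| (mul_pos hγ (Nat.cast_pos.2 hN)).trans_le hcard
  have hstab : ∀ t ≥ 0, diam A (θ t) ≤ ℓ := fun t => hθ.diam_le_of_barrier hA hcard hκ0.le
    (fun _ => hasDerivAt_const _ ℓ) (fun _ _ => ⟨hℓ.1.le, hℓπ.le⟩) h0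
    (fun _ _ => by simpa using hrate)
  have hcos_nonneg : 0 ≤ cos (ℓ / 2) := cos_nonneg_of_mem_Icc ⟨by linarith [hℓ.1], by linarith⟩
  have hconc := concaveOn_contractionRate hγ.le hℓπ.le (by nlinarith)
  refine ⟨⟨hstab, hθ.limsup_diam_le hA hcard hκ0 hℓπ.le hconc hφ₁mem.1 hφ₁ν.le ?_ hstab, ?_⟩,
    hθ.exists_forall_diam_le hA hcard hκ0.le ⟨hℓ.1.le, hℓπ.le⟩ hstab hrate⟩
  · exact lt_of_mul_lt_mul_left (hφ₁ν ▸ hrate) hκ0.le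
  · exact hφ₁root ▸ le_mul_contractionRate hγ₁ hγ₂ (hθs ▸ hφ₁mem)
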